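/- Let g : {0,1}^n → ℝ with interaction terms Δ_u = Σ_{v ⊆ u} (−1)^{|u|−|v|} g(e_v). For a uniformly random permutation π of {1,...,n}, define AUC(π) = Σ_{j=0}^{n} g(e_{π({1,...,j})}) and ABC(π) = AUC(π) − (n+1)(g(0) + g(1))/2. Then E[ABC(π)] = ((n+1)/2) · Σ_{u ≠ ∅} ((1 − |u|)/(|u| + 1)) · Δ_u. -/

import Mathlib

open Finset

/-- The anchored interaction `Δ_u = Σ_{v ⊆ u} (−1)^{|u|−|v|} g(e_v)`, where
points of `{0,1}^n` are identified with subsets of `Fin n`. -/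
noncomputable def interaction {n : ℕ} (g : Finset (Fin n) → ℝ)
    (u : Finset (Fin n)) : ℝ :=
  ∑ v ∈ u.powerset, (-1 : ℝ) ^ (u.card - v.card) * g v

/-- Insertion AUC for the ordering given by the permutation `π`:
`AUC(π) = Σ_{j=0}^{n} g(e_{π({1,...,j})})`. -/
noncomputable def aucPerm {n : ℕ} (g : Finset (Fin n) → ℝ)
    (π : Equiv.Perm (Fin n)) : ℝ :=
  ∑ j ∈ Finset.range (n + 1),
    g ((univ.filter fun i : Fin n => i.val < j).image π)

/-- `ABC(π) = AUC(π) − (n+1)(g(0)+g(1))/2`. -/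
noncomputable def abcPerm {n : ℕ} (g : Finset (Fin n) → ℝ)
    (π : Equiv.Perm (Fin n)) : ℝ :=
  aucPerm g π - ((n : ℝ) + 1) * (g ∅ + g univ) / 2

/-! Averaged over `π`, the prefix `π({1,...,j})` is a uniformly random `j`-subset, so
`E[AUC] = Σ_t |t|! (n - |t|)! / n! · g(t)`. Möbius inversion on the Boolean lattice,
`g(t) = Σ_{u ⊆ t} Δ_u`, turns this into `Σ_u Δ_u Σ_{t ⊇ u} |t|! (n - |t|)! / n!`, and the
hockey-stick identity evaluates the inner sum to `(n + 1) / (|u| + 1)`, the expected number of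
prefixes containing `u`. Since `g(0) = Δ_∅` and `g(1) = Σ_u Δ_u`, subtracting
`(n + 1)(g(0) + g(1)) / 2` leaves the coefficient `(n + 1)/2 · (1 - |u|)/(|u| + 1)` on `Δ_u` for
`u ≠ ∅`, and `0` on `Δ_∅`. -/

open Equiv Nat

namespace Finset

variable {α : Type*} [DecidableEq α]

lemma image_perm_eq_self_iff {s : Finset α} {σ : Perm α} :
    s.image σ = s ↔ ∀ a, σ a ∈ s ↔ a ∈ s := by
  constructor
  · intro h a
    conv_lhs => rw [← h]
    exact σ.injective.mem_finset_image
  · intro h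
    refine eq_of_subset_of_card_le (fun b hb => ?_) (card_image_of_injective _ σ.injective).ge
    obtain ⟨a, ha, rfl⟩ := mem_image.1 hb
    exact (h a).2 ha

lemma sum_Icc_eq_sum_powerset_sdiff {M : Type*} [AddCommMonoid M] {s t : Finset α} (h : s ⊆ t)
    (f : Finset α → M) : ∑ u ∈ Icc s t, f u = ∑ x ∈ (t \ s).powerset, f (s ∪ x) := by
  rw [Icc_eq_image_powerset h, sum_image]
  intro x hx y hy hxy
  have hxs := disjoint_of_subset_left (mem_powerset.1 hx) sdiff_disjoint
  have hys := disjoint_of_subset_left (mem_powerset.1 hy) sdiff_disjoint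
  calc x = (s ∪ x) \ s := (union_sdiff_cancel_left hxs.symm).symm
    _ = (s ∪ y) \ s := congrArg (· \ s) hxy
    _ = y := union_sdiff_cancel_left hys.symm

lemma sum_Icc_neg_one_pow_card_sub {R : Type*} [CommRing R] {s t : Finset α} (h : s ⊆ t) :
    ∑ u ∈ Icc s t, (-1 : R) ^ (#u - #s) = if s = t then 1 else 0 := by
  rw [sum_Icc_eq_sum_powerset_sdiff h]
  have : ∀ x ∈ (t \ s).powerset, (-1 : R) ^ (#(s ∪ x) - #s) = (-1) ^ #x := fun x hx => by
    rw [card_union_of_disjoint (disjoint_of_subset_right (mem_powerset.1 hx) disjoint_sdiff),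
      add_tsub_cancel_left]
  have hsum := congrArg (Int.cast : ℤ → R) (sum_powerset_neg_one_pow_card (x := t \ s))
  push_cast at hsum
  rw [sum_congr rfl this, hsum]
  exact if_congr (sdiff_eq_empty_iff_subset.trans ⟨(subset_antisymm h ·), (·.ge)⟩) rfl rfl

variable [Fintype α]

lemma exists_perm_image_eq {s t : Finset α} (h : #s = #t) : ∃ σ : Perm α, s.image σ = t := by
  have e : s ≃ t := Fintype.equivOfCardEq (by simpa using h)
  refine ⟨e.extendSubtype, eq_of_subset_of_card_le ?_ ?_⟩
  · intro b hb
    obtain ⟨a, ha, rfl⟩ := mem_image.1 hb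
    exact e.extendSubtype_mem a ha
  · rw [card_image_of_injective _ e.extendSubtype.injective, h]

lemma card_perm_image_eq_self (s : Finset α) :
    #{σ : Perm α | s.image σ = s} = (#s)! * (Fintype.card α - #s)! := by
  -- a permutation fixes `s` setwise iff it preserves the indicator function of `s`
  have h := DomMulAct.stabilizer_card (f := fun a : α => decide (a ∈ s))
  rw [Fintype.prod_bool] at h
  simp only [Fintype.card_subtype] at h
  convert h using 2
  · ext σ
    simp [image_perm_eq_self_iff, funext_iff]
  · simp
  · simp [filter_not, card_univ_sdiff]

lemma card_perm_image_eq {s t : Finset α} (h : #s = #t) :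
    #{σ : Perm α | s.image σ = t} = (#s)! * (Fintype.card α - #s)! := by
  obtain ⟨τ, rfl⟩ := exists_perm_image_eq h
  rw [← card_perm_image_eq_self s]
  refine card_equiv (Equiv.mulLeft τ⁻¹) fun σ => ?_
  simp only [mem_filter, mem_univ, true_and, coe_mulLeft, Perm.coe_mul, ← image_image]
  constructor
  · intro hσ
    rw [hσ, image_image]
    simp
  · intro hσ
    conv_rhs => rw [← hσ, image_image]
    simp

theorem sum_perm_image {M : Type*} [AddCommMonoid M] (f : Finset α → M) (s : Finset α) :
    ∑ σ : Perm α, f (s.image σ)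
      = ((#s)! * (Fintype.card α - #s)!) • ∑ t ∈ powersetCard #s univ, f t := by
  have horbit : univ.image (fun σ : Perm α => s.image σ) = powersetCard #s univ := by
    ext t
    simp only [mem_image, mem_univ, true_and, mem_powersetCard_univ]
    exact ⟨fun ⟨σ, hσ⟩ => hσ ▸ card_image_of_injective _ σ.injective,
      fun h => exists_perm_image_eq h.symm⟩
  rw [sum_comp, horbit, smul_sum]
  refine sum_congr rfl fun t ht => ?_
  rw [card_perm_image_eq (mem_powersetCard_univ.1 ht).symm]

lemma card_add_one_mul_sum_Icc_factorial (s : Finset α) :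
    (#s + 1) * ∑ t ∈ Icc s univ, (#t)! * (Fintype.card α - #t)! = (Fintype.card α + 1)! := by
  set m := #s
  set r := #(univ \ s) with hr
  have hN : Fintype.card α = m + r := by
    rw [hr, card_univ_sdiff, add_tsub_cancel_of_le (card_le_univ s)]
  have hterm : ∀ i ∈ range (r + 1), r.choose i • ((m + i)! * (m + r - (m + i))!) =
      m ! * r ! * (i + m).choose m := fun i hi => by
    rw [Nat.add_sub_add_left, ← choose_mul_factorial_mul_factorial (mem_range_succ_iff.1 hi),
      add_comm m i, ← add_choose_mul_factorial_mul_factorial, smul_eq_mul]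
    ring
  have hcard : ∀ x ∈ (univ \ s).powerset, #(s ∪ x) = m + #x := fun x hx =>
    card_union_of_disjoint (disjoint_of_subset_right (mem_powerset.1 hx) disjoint_sdiff)
  rw [sum_Icc_eq_sum_powerset_sdiff (subset_univ s), hN,
    sum_congr rfl fun x hx => by rw [hcard x hx],
    sum_powerset_apply_card (fun k => (m + k)! * (m + r - (m + k))!), sum_congr rfl hterm,
    ← mul_sum, sum_range_add_choose, add_assoc r, show m + r + 1 = r + (m + 1) by omega,
    ← add_choose_mul_factorial_mul_factorial r (m + 1), factorial_succ]
  ring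

end Finset

lemma sum_powerset_interaction {n : ℕ} (g : Finset (Fin n) → ℝ) (t : Finset (Fin n)) :
    ∑ u ∈ t.powerset, interaction g u = g t := by
  unfold interaction
  rw [sum_comm' (t' := t.powerset) (s' := fun v => Icc v t)]
  · simp_rw [← sum_mul]
    rw [sum_congr rfl fun v hv => by rw [sum_Icc_neg_one_pow_card_sub (mem_powerset.1 hv)]]
    simp
  · intro u v
    simp only [mem_powerset, mem_Icc]
    exact ⟨fun ⟨hut, hvu⟩ => ⟨⟨hvu, hut⟩, hvu.trans hut⟩,
      fun ⟨⟨hvu, hut⟩, _⟩ => ⟨hut, hvu⟩⟩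

lemma sum_aucPerm {n : ℕ} (g : Finset (Fin n) → ℝ) :
    ∑ π : Perm (Fin n), aucPerm g π = ∑ t, ((#t)! * (n - #t)! : ℝ) * g t := by
  unfold aucPerm
  rw [sum_comm, ← powerset_univ, sum_powerset, Finset.card_univ, Fintype.card_fin]
  refine sum_congr rfl fun j hj => ?_
  rw [sum_perm_image, Fin.card_filter_val_lt, min_eq_right (mem_range_succ_iff.1 hj),
    Fintype.card_fin, nsmul_eq_mul, mul_sum]
  refine sum_congr rfl fun t ht => ?_
  rw [(mem_powersetCard.1 ht).2]
  push_cast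
  rfl

lemma sum_aucPerm_div_factorial {n : ℕ} (g : Finset (Fin n) → ℝ) :
    (∑ π : Perm (Fin n), aucPerm g π) / n ! =
      ∑ u, ((n + 1) / (#u + 1) : ℝ) * interaction g u := by
  have hweight : ∀ u : Finset (Fin n),
      ∑ t ∈ Icc u univ, ((#t)! * (n - #t)! : ℝ) = (n + 1)! / (#u + 1) := fun u => by
    have h := card_add_one_mul_sum_Icc_factorial u
    rw [Fintype.card_fin] at h
    rw [eq_div_iff (by positivity), mul_comm, ← h]
    push_cast
    rfl
  rw [sum_aucPerm, sum_div]
  calc ∑ t, ((#t)! * (n - #t)! : ℝ) * g t / n !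
      = ∑ t, ∑ u ∈ t.powerset, ((#t)! * (n - #t)! : ℝ) / n ! * interaction g u := by
        refine sum_congr rfl fun t _ => ?_
        rw [← mul_sum, sum_powerset_interaction]
        ring
    _ = ∑ u, ∑ t ∈ Icc u univ, ((#t)! * (n - #t)! : ℝ) / n ! * interaction g u := by
        refine sum_comm' fun t u => ?_
        simp [mem_powerset, mem_Icc]
    _ = _ := by
        simp_rw [← sum_mul, ← sum_div, hweight]
        refine sum_congr rfl fun u _ => ?_
        rw [factorial_succ]
        push_cast
        field_simp

/-- The expected ABC under a uniformly random permutation: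
`E[ABC(π)] = ((n+1)/2) Σ_{u ≠ ∅} ((1 − |u|)/(|u| + 1)) Δ_u`. -/
theorem expected_abc (n : ℕ) (g : Finset (Fin n) → ℝ) :
    (∑ π : Equiv.Perm (Fin n), abcPerm g π) / (n.factorial : ℝ)
      = (((n : ℝ) + 1) / 2) *
        ∑ u ∈ (univ : Finset (Finset (Fin n))).erase ∅,
          ((1 - (u.card : ℝ)) / ((u.card : ℝ) + 1)) * interaction g u := by
  have hg0 : g ∅ = interaction g ∅ := by simp [interaction]
  have hg1 : g univ = ∑ u, interaction g u := by
    rw [← sum_powerset_interaction g univ, powerset_univ]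
  calc (∑ π, abcPerm g π) / n !
      = (∑ π, aucPerm g π) / (n ! : ℝ) - (n + 1) / 2 * (g ∅ + g univ) := by
        simp only [abcPerm, sum_sub_distrib, sum_const, Finset.card_univ, Fintype.card_perm,
          Fintype.card_fin, nsmul_eq_mul]
        field_simp
    _ = ∑ u, (((n + 1) / 2 : ℝ) * ((1 - #u) / (#u + 1)) * interaction g u)
          - (n + 1) / 2 * interaction g ∅ := by
        rw [sum_aucPerm_div_factorial, hg0, hg1, mul_add, mul_sum, sub_add_eq_sub_sub_swap,
          ← sum_sub_distrib]
        congr 1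
        refine sum_congr rfl fun u _ => ?_
        field_simp
        ring
    _ = _ := by
        rw [sum_erase_eq_sub (mem_univ ∅), mul_sub, mul_sum]
        simp [mul_assoc]
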